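/- Ideal property: if V ⊆ U is open, h : V → U is holomorphic with c_v(h) := sup_{x∈V} v(x)/v(h(x)) < ∞, f ∈ Π_p^{Hv}(U,F), and T : F → G is a bounded linear operator, then T ∘ f ∘ h ∈ Π_p^{Hv}(V,G) with π_p^{Hv}(T ∘ f ∘ h) ≤ ‖T‖·π_p^{Hv}(f)·c_v(h). -/
import Mathlib


open scoped BigOperators
open MeasureTheory

noncomputable section

/-- The closed unit ball of the weighted holomorphic space `Hv(U)`. -/
def HvBall {E : Type*} [NormedAddCommGroup E] [NormedSpace ℂ E]
    (v : E → ℝ) (U : Set E) : Set (E → ℂ) :=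
  {g | DifferentiableOn ℂ g U ∧ ∀ x ∈ U, v x * ‖g x‖ ≤ 1}

/-- `sup_{g ∈ B_{Hv(U)}} (∑ |λᵢ|^p v(xᵢ)^p |g(xᵢ)|^p)^(1/p)`. -/
def hvSup {E : Type*} [NormedAddCommGroup E] [NormedSpace ℂ E]
    (p : ℝ) (v : E → ℝ) (U : Set E) {n : ℕ} (lam : Fin n → ℂ) (x : Fin n → E) : ℝ :=
  ⨆ g : HvBall v U, (∑ i, ‖lam i‖ ^ p * v (x i) ^ p * ‖(g : E → ℂ) (x i)‖ ^ p) ^ (1 / p)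

/-- `f` satisfies the `p`-summing weighted holomorphic inequality with constant `C`. -/
def PSummingWith {E F : Type*} [NormedAddCommGroup E] [NormedSpace ℂ E]
    [NormedAddCommGroup F] [NormedSpace ℂ F]
    (p : ℝ) (v : E → ℝ) (U : Set E) (f : E → F) (C : ℝ) : Prop :=
  ∀ (n : ℕ) (lam : Fin n → ℂ) (x : Fin n → E), (∀ i, x i ∈ U) →
    (∑ i, ‖lam i‖ ^ p * v (x i) ^ p * ‖f (x i)‖ ^ p) ^ (1 / p) ≤ C * hvSup p v U lam x

/-- The `p`-summing weighted holomorphic norm `π_p^{Hv}(f)`. -/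
def pihv {E F : Type*} [NormedAddCommGroup E] [NormedSpace ℂ E]
    [NormedAddCommGroup F] [NormedSpace ℂ F]
    (p : ℝ) (v : E → ℝ) (U : Set E) (f : E → F) : ℝ :=
  sInf {C | 0 ≤ C ∧ PSummingWith p v U f C}


lemma zero_mem_HvBall {E : Type*} [NormedAddCommGroup E] [NormedSpace ℂ E]
    (v : E → ℝ) (U : Set E) : (fun _ => (0:ℂ)) ∈ HvBall v U :=
  ⟨differentiableOn_const 0, fun x _ => by simp⟩

instance HvBall_nonempty {E : Type*} [NormedAddCommGroup E] [NormedSpace ℂ E]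
    (v : E → ℝ) (U : Set E) : Nonempty ↥(HvBall v U) :=
  ⟨⟨_, zero_mem_HvBall v U⟩⟩

lemma hvSup_bddAbove {E : Type*} [NormedAddCommGroup E] [NormedSpace ℂ E]
    {p : ℝ} (hp : 1 ≤ p) {v : E → ℝ} {U : Set E} (hv : ∀ x ∈ U, 0 ≤ v x)
    {n : ℕ} (lam : Fin n → ℂ) (x : Fin n → E) (hx : ∀ i, x i ∈ U) :
    BddAbove (Set.range fun g : HvBall v U =>
      (∑ i, ‖lam i‖ ^ p * v (x i) ^ p * ‖(g : E → ℂ) (x i)‖ ^ p) ^ (1 / p)) := by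
  have hp0 : (0:ℝ) ≤ p := le_trans zero_le_one hp
  refine ⟨(∑ i, ‖lam i‖ ^ p) ^ (1/p), ?_⟩
  rintro _ ⟨g, rfl⟩
  apply Real.rpow_le_rpow
  · exact Finset.sum_nonneg fun i _ =>
      mul_nonneg (mul_nonneg (Real.rpow_nonneg (norm_nonneg _) p)
        (Real.rpow_nonneg (hv _ (hx i)) p)) (Real.rpow_nonneg (norm_nonneg _) p)
  · apply Finset.sum_le_sum
    intro i _
    have h1 : v (x i) ^ p * ‖(g : E → ℂ) (x i)‖ ^ p ≤ 1 := by
      rw [← Real.mul_rpow (hv _ (hx i)) (norm_nonneg _)]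
      exact Real.rpow_le_one (mul_nonneg (hv _ (hx i)) (norm_nonneg _))
        (g.2.2 _ (hx i)) hp0
    calc ‖lam i‖ ^ p * v (x i) ^ p * ‖(g : E → ℂ) (x i)‖ ^ p
        = ‖lam i‖ ^ p * (v (x i) ^ p * ‖(g : E → ℂ) (x i)‖ ^ p) := by ring
      _ ≤ ‖lam i‖ ^ p * 1 := mul_le_mul_of_nonneg_left h1 (Real.rpow_nonneg (norm_nonneg _) p)
      _ = ‖lam i‖ ^ p := mul_one _
  · positivity

lemma le_hvSup {E : Type*} [NormedAddCommGroup E] [NormedSpace ℂ E]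
    {p : ℝ} (hp : 1 ≤ p) {v : E → ℝ} {U : Set E} (hv : ∀ x ∈ U, 0 ≤ v x)
    {n : ℕ} (lam : Fin n → ℂ) (x : Fin n → E) (hx : ∀ i, x i ∈ U)
    {g : E → ℂ} (hg : g ∈ HvBall v U) :
    (∑ i, ‖lam i‖ ^ p * v (x i) ^ p * ‖g (x i)‖ ^ p) ^ (1 / p) ≤ hvSup p v U lam x :=
  le_ciSup (hvSup_bddAbove hp hv lam x hx) (⟨g, hg⟩ : HvBall v U)

lemma hvSup_le {E : Type*} [NormedAddCommGroup E] [NormedSpace ℂ E]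
    {p : ℝ} {v : E → ℝ} {U : Set E}
    {n : ℕ} {lam : Fin n → ℂ} {x : Fin n → E} {M : ℝ}
    (hM : ∀ g ∈ HvBall v U, (∑ i, ‖lam i‖ ^ p * v (x i) ^ p * ‖g (x i)‖ ^ p) ^ (1 / p) ≤ M) :
    hvSup p v U lam x ≤ M :=
  ciSup_le fun g => hM g g.2

lemma hvSup_nonneg {E : Type*} [NormedAddCommGroup E] [NormedSpace ℂ E]
    {p : ℝ} (hp : 1 ≤ p) {v : E → ℝ} {U : Set E} (hv : ∀ x ∈ U, 0 ≤ v x)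
    {n : ℕ} (lam : Fin n → ℂ) (x : Fin n → E) (hx : ∀ i, x i ∈ U) :
    0 ≤ hvSup p v U lam x := by
  refine le_trans ?_ (le_hvSup hp hv lam x hx (zero_mem_HvBall v U))
  apply Real.rpow_nonneg
  exact Finset.sum_nonneg fun i _ =>
    mul_nonneg (mul_nonneg (Real.rpow_nonneg (norm_nonneg _) p)
      (Real.rpow_nonneg (hv _ (hx i)) p)) (Real.rpow_nonneg (norm_nonneg _) p)

lemma key_psumming {E F G : Type*} [NormedAddCommGroup E] [NormedSpace ℂ E]
    [NormedAddCommGroup F] [NormedSpace ℂ F]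
    [NormedAddCommGroup G] [NormedSpace ℂ G]
    {U V : Set E} (hVU : V ⊆ U) {v : E → ℝ} (hv : ∀ x ∈ U, 0 < v x)
    {p : ℝ} (hp : 1 ≤ p)
    {h : E → E} (hh : DifferentiableOn ℂ h V) (hhU : ∀ x ∈ V, h x ∈ U)
    {c : ℝ} (hc0 : 0 < c) (hcb : ∀ x ∈ V, v x / v (h x) ≤ c)
    {f : E → F} {C : ℝ} (hC0 : 0 ≤ C) (hfC : PSummingWith p v U f C)
    (T : F →L[ℂ] G) :
    PSummingWith p v V (fun x => T (f (h x))) (‖T‖ * C * c) := by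
  have hv' : ∀ x ∈ U, 0 ≤ v x := fun x hx => (hv x hx).le
  have hp0 : (0:ℝ) < p := lt_of_lt_of_le zero_lt_one hp
  have hip0 : (0:ℝ) ≤ 1/p := by positivity
  intro n lam x hx
  set y : Fin n → E := fun i => h (x i) with hy
  have hyU : ∀ i, y i ∈ U := fun i => hhU _ (hx i)
  have hvy : ∀ i, 0 < v (y i) := fun i => hv _ (hyU i)
  have hvx : ∀ i, 0 < v (x i) := fun i => hv _ (hVU (hx i))
  set μ : Fin n → ℂ := fun i => lam i * ((v (x i) / v (y i) : ℝ) : ℂ) with hμ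
  have hμn : ∀ i, ‖μ i‖ = ‖lam i‖ * (v (x i) / v (y i)) := by
    intro i
    have hr : ‖((v (x i) / v (y i) : ℝ) : ℂ)‖ = v (x i) / v (y i) := by
      rw [Complex.norm_real, Real.norm_eq_abs, abs_of_pos (div_pos (hvx i) (hvy i))]
    show ‖lam i * ((v (x i) / v (y i) : ℝ) : ℂ)‖ = _
    rw [norm_mul, hr]
  have hterm : ∀ i, ‖μ i‖ ^ p * v (y i) ^ p = ‖lam i‖ ^ p * v (x i) ^ p := by
    intro i
    rw [hμn i, Real.mul_rpow (norm_nonneg _) (div_pos (hvx i) (hvy i)).le, mul_assoc,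
      ← Real.mul_rpow (div_pos (hvx i) (hvy i)).le (hvy i).le,
      div_mul_cancel₀ _ (hvy i).ne']
  have sum_nonneg1 : (0:ℝ) ≤ ∑ i, ‖μ i‖ ^ p * v (y i) ^ p * ‖f (y i)‖ ^ p :=
    Finset.sum_nonneg fun i _ =>
      mul_nonneg (mul_nonneg (Real.rpow_nonneg (norm_nonneg _) p)
        (Real.rpow_nonneg (hvy i).le p)) (Real.rpow_nonneg (norm_nonneg _) p)
  -- Step 1
  have step1 : (∑ i, ‖lam i‖ ^ p * v (x i) ^ p * ‖T (f (y i))‖ ^ p) ^ (1/p)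
      ≤ ‖T‖ * (∑ i, ‖μ i‖ ^ p * v (y i) ^ p * ‖f (y i)‖ ^ p) ^ (1/p) := by
    have hsum : ∑ i, ‖lam i‖ ^ p * v (x i) ^ p * ‖T (f (y i))‖ ^ p
        ≤ ‖T‖ ^ p * ∑ i, ‖μ i‖ ^ p * v (y i) ^ p * ‖f (y i)‖ ^ p := by
      rw [Finset.mul_sum]
      apply Finset.sum_le_sum
      intro i _
      rw [hterm i]
      have h1 : ‖T (f (y i))‖ ^ p ≤ ‖T‖ ^ p * ‖f (y i)‖ ^ p := by
        rw [← Real.mul_rpow (norm_nonneg T) (norm_nonneg _)]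
        exact Real.rpow_le_rpow (norm_nonneg _) (T.le_opNorm _) hp0.le
      have h2 : (0:ℝ) ≤ ‖lam i‖ ^ p * v (x i) ^ p :=
        mul_nonneg (Real.rpow_nonneg (norm_nonneg _) p) (Real.rpow_nonneg (hvx i).le p)
      calc ‖lam i‖ ^ p * v (x i) ^ p * ‖T (f (y i))‖ ^ p
          ≤ ‖lam i‖ ^ p * v (x i) ^ p * (‖T‖ ^ p * ‖f (y i)‖ ^ p) :=
            mul_le_mul_of_nonneg_left h1 h2
        _ = ‖T‖ ^ p * (‖lam i‖ ^ p * v (x i) ^ p * ‖f (y i)‖ ^ p) := by ring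
    calc (∑ i, ‖lam i‖ ^ p * v (x i) ^ p * ‖T (f (y i))‖ ^ p) ^ (1/p)
        ≤ (‖T‖ ^ p * ∑ i, ‖μ i‖ ^ p * v (y i) ^ p * ‖f (y i)‖ ^ p) ^ (1/p) := by
          apply Real.rpow_le_rpow _ hsum hip0
          exact Finset.sum_nonneg fun i _ =>
            mul_nonneg (mul_nonneg (Real.rpow_nonneg (norm_nonneg _) p)
              (Real.rpow_nonneg (hvx i).le p)) (Real.rpow_nonneg (norm_nonneg _) p)
      _ = ‖T‖ * (∑ i, ‖μ i‖ ^ p * v (y i) ^ p * ‖f (y i)‖ ^ p) ^ (1/p) := by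
          rw [Real.mul_rpow (Real.rpow_nonneg (norm_nonneg T) p) sum_nonneg1,
            ← Real.rpow_mul (norm_nonneg T), mul_one_div_cancel hp0.ne', Real.rpow_one]
  -- Step 2
  have step2 : (∑ i, ‖μ i‖ ^ p * v (y i) ^ p * ‖f (y i)‖ ^ p) ^ (1/p)
      ≤ C * hvSup p v U μ y := hfC n μ y hyU
  -- Step 3
  have step3 : hvSup p v U μ y ≤ c * hvSup p v V lam x := by
    apply hvSup_le
    intro g hg
    set g' : E → ℂ := fun z => ((c : ℂ))⁻¹ * g (h z) with hg'def
    have hg' : g' ∈ HvBall v V := by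
      constructor
      · exact DifferentiableOn.const_mul
          (DifferentiableOn.comp hg.1 hh (fun z hz => hhU z hz)) _
      · intro z hz
        have hb : v z * ‖g (h z)‖ ≤ c := by
          have hne : v (h z) ≠ 0 := (hv _ (hhU z hz)).ne'
          have e1 : v z * ‖g (h z)‖ = (v z / v (h z)) * (v (h z) * ‖g (h z)‖) := by
            field_simp
          rw [e1]
          calc (v z / v (h z)) * (v (h z) * ‖g (h z)‖) ≤ c * 1 :=
                mul_le_mul (hcb z hz) (hg.2 _ (hhU z hz))
                  (mul_nonneg (hv _ (hhU z hz)).le (norm_nonneg _))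
                  hc0.le
            _ = c := mul_one c
        have hn : ‖g' z‖ = c⁻¹ * ‖g (h z)‖ := by
          show ‖((c:ℂ))⁻¹ * g (h z)‖ = _
          rw [norm_mul, norm_inv, Complex.norm_real, Real.norm_eq_abs, abs_of_pos hc0]
        rw [hn]
        calc v z * (c⁻¹ * ‖g (h z)‖) = c⁻¹ * (v z * ‖g (h z)‖) := by ring
          _ ≤ c⁻¹ * c := mul_le_mul_of_nonneg_left hb (inv_nonneg.mpr hc0.le)
          _ = 1 := inv_mul_cancel₀ hc0.ne'
    have hval : ∑ i, ‖μ i‖ ^ p * v (y i) ^ p * ‖g (y i)‖ ^ p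
        = c ^ p * ∑ i, ‖lam i‖ ^ p * v (x i) ^ p * ‖g' (x i)‖ ^ p := by
      rw [Finset.mul_sum]
      apply Finset.sum_congr rfl
      intro i _
      have hn : ‖g' (x i)‖ = c⁻¹ * ‖g (y i)‖ := by
        show ‖((c:ℂ))⁻¹ * g (h (x i))‖ = _
        rw [norm_mul, norm_inv, Complex.norm_real, Real.norm_eq_abs, abs_of_pos hc0]
      rw [hterm i, hn, Real.mul_rpow (inv_nonneg.mpr hc0.le) (norm_nonneg _)]
      have : c ^ p * (c⁻¹) ^ p = 1 := by
        rw [← Real.mul_rpow hc0.le (inv_nonneg.mpr hc0.le), mul_inv_cancel₀ hc0.ne',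
          Real.one_rpow]
      calc ‖lam i‖ ^ p * v (x i) ^ p * ‖g (y i)‖ ^ p
          = (c ^ p * (c⁻¹) ^ p) * (‖lam i‖ ^ p * v (x i) ^ p * ‖g (y i)‖ ^ p) := by
            rw [this, one_mul]
        _ = c ^ p * (‖lam i‖ ^ p * v (x i) ^ p * ((c⁻¹) ^ p * ‖g (y i)‖ ^ p)) := by ring
    have sum_nonneg2 : (0:ℝ) ≤ ∑ i, ‖lam i‖ ^ p * v (x i) ^ p * ‖g' (x i)‖ ^ p :=
      Finset.sum_nonneg fun i _ =>
        mul_nonneg (mul_nonneg (Real.rpow_nonneg (norm_nonneg _) p)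
          (Real.rpow_nonneg (hvx i).le p)) (Real.rpow_nonneg (norm_nonneg _) p)
    calc (∑ i, ‖μ i‖ ^ p * v (y i) ^ p * ‖g (y i)‖ ^ p) ^ (1/p)
        = (c ^ p * ∑ i, ‖lam i‖ ^ p * v (x i) ^ p * ‖g' (x i)‖ ^ p) ^ (1/p) := by
          rw [hval]
      _ = c * (∑ i, ‖lam i‖ ^ p * v (x i) ^ p * ‖g' (x i)‖ ^ p) ^ (1/p) := by
          rw [Real.mul_rpow (Real.rpow_nonneg hc0.le p) sum_nonneg2,
            ← Real.rpow_mul hc0.le, mul_one_div_cancel hp0.ne', Real.rpow_one]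
      _ ≤ c * hvSup p v V lam x := by
          exact mul_le_mul_of_nonneg_left
            (le_hvSup hp (fun z hz => (hv z (hVU hz)).le) lam x hx hg') hc0.le
  -- Combine
  calc (∑ i, ‖lam i‖ ^ p * v (x i) ^ p * ‖T (f (h (x i)))‖ ^ p) ^ (1/p)
      ≤ ‖T‖ * (∑ i, ‖μ i‖ ^ p * v (y i) ^ p * ‖f (y i)‖ ^ p) ^ (1/p) := step1
    _ ≤ ‖T‖ * (C * hvSup p v U μ y) :=
        mul_le_mul_of_nonneg_left step2 (norm_nonneg T)
    _ ≤ ‖T‖ * (C * (c * hvSup p v V lam x)) :=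
        mul_le_mul_of_nonneg_left (mul_le_mul_of_nonneg_left step3 hC0) (norm_nonneg T)
    _ = ‖T‖ * C * c * hvSup p v V lam x := by ring

/-- Ideal property: for `V ⊆ U` open, `h : V → U` holomorphic with
`c_v(h) = sup_{x∈V} v(x)/v(h(x)) < ∞`, `f ∈ Π_p^{Hv}(U,F)` and `T` bounded linear,
`T ∘ f ∘ h ∈ Π_p^{Hv}(V,G)` with `π_p^{Hv}(T∘f∘h) ≤ ‖T‖ π_p^{Hv}(f) c_v(h)`. -/
theorem stmt6 {E F G : Type*} [NormedAddCommGroup E] [NormedSpace ℂ E] [CompleteSpace E]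
    [NormedAddCommGroup F] [NormedSpace ℂ F] [CompleteSpace F]
    [NormedAddCommGroup G] [NormedSpace ℂ G] [CompleteSpace G]
    (U V : Set E) (hU : IsOpen U) (hV : IsOpen V) (hVU : V ⊆ U)
    (v : E → ℝ) (hv : ∀ x ∈ U, 0 < v x) (hvc : ContinuousOn v U)
    (p : ℝ) (hp : 1 ≤ p)
    (h : E → E) (hh : DifferentiableOn ℂ h V) (hhU : ∀ x ∈ V, h x ∈ U)
    (hc : BddAbove (Set.range fun x : V => v (x : E) / v (h (x : E))))
    (f : E → F) (hf : DifferentiableOn ℂ f U)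
    (hfp : ∃ C, 0 ≤ C ∧ PSummingWith p v U f C)
    (T : F →L[ℂ] G) :
    (∃ C, 0 ≤ C ∧ PSummingWith p v V (fun x => T (f (h x))) C) ∧
      pihv p v V (fun x => T (f (h x))) ≤
        ‖T‖ * pihv p v U f * ⨆ x : V, v (x : E) / v (h (x : E)) := by
  obtain ⟨C, hC0, hfC⟩ := hfp
  have hp0 : (0:ℝ) < p := lt_of_lt_of_le zero_lt_one hp
  have hbdd : BddBelow {C | 0 ≤ C ∧ PSummingWith p v V (fun x => T (f (h x))) C} :=
    ⟨0, fun b hb => hb.1⟩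
  by_cases hVne : V.Nonempty
  · -- V nonempty
    set c : ℝ := ⨆ x : V, v (x : E) / v (h (x : E)) with hcdef
    have hcb : ∀ z ∈ V, v z / v (h z) ≤ c := fun z hz =>
      le_ciSup hc (⟨z, hz⟩ : V)
    obtain ⟨x0, hx0⟩ := hVne
    have hc0 : 0 < c :=
      lt_of_lt_of_le (div_pos (hv _ (hVU hx0)) (hv _ (hhU _ hx0))) (hcb _ hx0)
    have hkey : ∀ C' : ℝ, 0 ≤ C' → PSummingWith p v U f C' →
        PSummingWith p v V (fun x => T (f (h x))) (‖T‖ * C' * c) :=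
      fun C' h0 h1 => key_psumming hVU hv hp hh hhU hc0 hcb h0 h1 T
    have hmem : ∀ C' : ℝ, 0 ≤ C' → PSummingWith p v U f C' →
        pihv p v V (fun x => T (f (h x))) ≤ ‖T‖ * C' * c := by
      intro C' h0 h1
      exact csInf_le hbdd ⟨by positivity, hkey C' h0 h1⟩
    refine ⟨⟨‖T‖ * C * c, by positivity, hkey C hC0 hfC⟩, ?_⟩
    by_cases hT : ‖T‖ = 0
    · have h1 : pihv p v V (fun x => T (f (h x))) ≤ 0 := by
        have := hmem C hC0 hfC
        rw [hT] at this
        simpa using this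
      have h2 : (0:ℝ) ≤ ‖T‖ * pihv p v U f * c := by
        rw [hT]; simp
      exact le_trans h1 h2
    · have hT0 : 0 < ‖T‖ := (norm_nonneg T).lt_of_ne' hT
      have hdiv : pihv p v V (fun x => T (f (h x))) / (‖T‖ * c) ≤ pihv p v U f := by
        unfold pihv
        refine le_csInf ⟨C, ⟨hC0, hfC⟩⟩ ?_
        rintro C' ⟨h0, h1⟩
        rw [div_le_iff₀ (by positivity)]
        calc pihv p v V (fun x => T (f (h x))) ≤ ‖T‖ * C' * c := hmem C' h0 h1
          _ = C' * (‖T‖ * c) := by ring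
      have := (div_le_iff₀ (by positivity : (0:ℝ) < ‖T‖ * c)).mp hdiv
      calc pihv p v V (fun x => T (f (h x))) ≤ pihv p v U f * (‖T‖ * c) := this
        _ = ‖T‖ * pihv p v U f * c := by ring
  · -- V empty
    have hVe : V = ∅ := Set.not_nonempty_iff_eq_empty.mp hVne
    have hps : PSummingWith p v V (fun x => T (f (h x))) 0 := by
      intro n lam x hx
      cases n with
      | zero =>
          simp only [Finset.univ_eq_empty, Finset.sum_empty]
          rw [Real.zero_rpow (by positivity : (1:ℝ)/p ≠ 0), zero_mul]
      | succ m => exact absurd (hx 0) (by simp [hVe])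
    have h1 : pihv p v V (fun x => T (f (h x))) ≤ 0 :=
      csInf_le hbdd ⟨le_refl 0, hps⟩
    have hce : (⨆ x : V, v (x : E) / v (h (x : E))) = 0 := by
      haveI : IsEmpty ↥V := by rw [hVe]; exact Set.isEmpty_coe_sort.mpr rfl
      exact Real.iSup_of_isEmpty _
    refine ⟨⟨0, le_refl 0, hps⟩, ?_⟩
    rw [hce, mul_zero]
    exact h1
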